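/- arXiv:0806.1180 — 3 statements merged into one kernel-verified Lean document; each statement's English description precedes it below -/
import Mathlib

section
/- Let g, h, y be non-negative locally integrable functions on (t_0, ∞) satisfying dy/dt ≤ g·y + h for all t ≥ t_0, and suppose there exist positive constants r, c_1, c_2, c_3 such that for all t ≥ t_0: ∫_t^{t+r} g(s) ds ≤ c_1, ∫_t^{t+r} h(s) ds ≤ c_2, and ∫_t^{t+r} y(s) ds ≤ c_3. Then y(t+r) ≤ (c_3/r + c_2) · e^{c_1} for all t ≥ t_0. -/
open MeasureTheory Real

open Set Filter intervalIntegral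

/-!
Since `g` is merely integrable, the integrating factor `exp (-∫ g)` is only absolutely continuous,
so Gronwall's inequality is proved through the fundamental theorem of calculus for absolutely
continuous functions: if `u x ≤ R x := A + ∫ₐˣ (g u + h)`, then `R e^{-∫ₐˣ g}` has derivative
`(g (u - R) + h) e^{-∫ₐˣ g} ≤ h` a.e., so `u b ≤ (A + ∫ₐᵇ h) e^{∫ₐᵇ g}`. Applied to `y` from any
starting point `s` of the window `[t, t + r]` this gives `y (t + r) ≤ (y s + c₂) e^{c₁}`, and
averaging over `s ∈ [t, t + r]` replaces `y s` by its mean, which is at most `c₃ / r`.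
-/

theorem LipschitzOnWith.comp_absolutelyContinuousOnInterval {X Y : Type*} [PseudoMetricSpace X]
    [PseudoMetricSpace Y] {φ : X → Y} {K : NNReal} {s : Set X} {f : ℝ → X} {a b : ℝ}
    (hφ : LipschitzOnWith K φ s) (hfs : MapsTo f (uIcc a b) s)
    (hf : AbsolutelyContinuousOnInterval f a b) :
    AbsolutelyContinuousOnInterval (φ ∘ f) a b := by
  have hKf := Tendsto.const_mul (K : ℝ) hf
  rw [mul_zero] at hKf
  refine squeeze_zero' (.of_forall fun _ ↦ Finset.sum_nonneg fun _ _ ↦ dist_nonneg) ?_ hKf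
  filter_upwards [mem_inf_of_right (mem_principal_self _)] with E hE
  rw [Finset.mul_sum]
  exact Finset.sum_le_sum fun i hi ↦
    hφ.dist_le_mul _ (hfs (hE.1 i hi).1) _ (hfs (hE.1 i hi).2)

theorem ContDiff.comp_absolutelyContinuousOnInterval {E : Type*} [NormedAddCommGroup E]
    [NormedSpace ℝ E] {φ : ℝ → E} {f : ℝ → ℝ} {a b : ℝ} (hφ : ContDiff ℝ 1 φ)
    (hf : AbsolutelyContinuousOnInterval f a b) :
    AbsolutelyContinuousOnInterval (φ ∘ f) a b := by
  obtain ⟨C, hC⟩ := hf.exists_bound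
  obtain ⟨K, hK⟩ := hφ.contDiffOn.exists_lipschitzOnWith one_ne_zero (convex_Icc (-C) C)
    isCompact_Icc
  exact hK.comp_absolutelyContinuousOnInterval (fun x hx ↦ abs_le.1 (hC x hx)) hf

theorem le_mul_exp_integral_of_le_add_integral {u g h : ℝ → ℝ} {a b A : ℝ} (hab : a ≤ b)
    (hu : ContinuousOn u (Icc a b)) (hgi : IntervalIntegrable g volume a b)
    (hhi : IntervalIntegrable h volume a b) (hg0 : ∀ x ∈ Icc a b, 0 ≤ g x)
    (hh0 : ∀ x ∈ Icc a b, 0 ≤ h x)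
    (hle : ∀ x ∈ Icc a b, u x ≤ A + ∫ t in a..x, (g t * u t + h t)) :
    u b ≤ (A + ∫ t in a..b, h t) * exp (∫ t in a..b, g t) := by
  set φ := fun t ↦ g t * u t + h t
  have hφi : IntervalIntegrable φ volume a b :=
    (hgi.mul_continuousOn (by rwa [uIcc_of_le hab])).add hhi
  set R := fun x ↦ A + ∫ t in a..x, φ t
  set G := fun x ↦ ∫ t in a..x, g t
  have hRac : AbsolutelyContinuousOnInterval R a b :=
    (contDiff_const.add contDiff_id).comp_absolutelyContinuousOnInterval
      (hφi.absolutelyContinuousOnInterval_intervalIntegral left_mem_uIcc)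
  have hEac : AbsolutelyContinuousOnInterval (fun x ↦ exp (-G x)) a b :=
    (contDiff_neg (𝕜 := ℝ) (F := ℝ) (n := 1)).exp.comp_absolutelyContinuousOnInterval
      (hgi.absolutelyContinuousOnInterval_intervalIntegral left_mem_uIcc)
  have hderiv : deriv (fun x ↦ R x * exp (-G x)) ≤ᵐ[volume.restrict (Icc a b)] h := by
    rw [EventuallyLE, ae_restrict_iff' measurableSet_Icc]
    filter_upwards [hφi.ae_hasDerivAt_integral, hgi.ae_hasDerivAt_integral] with x hRx hGx hx
    have hx' : x ∈ uIcc a b := by rwa [uIcc_of_le hab]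
    have hG0 : 0 ≤ G x :=
      intervalIntegral.integral_nonneg hx.1 fun t ht ↦ hg0 t ⟨ht.1, ht.2.trans hx.2⟩
    have hQ : HasDerivAt (fun x ↦ R x * exp (-G x))
        (φ x * exp (-G x) + R x * (exp (-G x) * -g x)) x :=
      ((hRx hx' a left_mem_uIcc).const_add A).mul (hGx hx' a left_mem_uIcc).neg.exp
    have hgu : g x * (u x - R x) ≤ 0 :=
      mul_nonpos_of_nonneg_of_nonpos (hg0 x hx) (sub_nonpos.2 (hle x hx))
    calc deriv (fun x ↦ R x * exp (-G x)) x = (g x * (u x - R x) + h x) * exp (-G x) := by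
          rw [hQ.deriv]; ring
      _ ≤ h x * exp (-G x) := by gcongr; linarith
      _ ≤ h x := mul_le_of_le_one_right (hh0 x hx) (exp_le_one_iff.2 (neg_nonpos.2 hG0))
  have hFTC := (hRac.fun_mul hEac).integral_deriv_eq_sub
  have hQb : R b * exp (-G b) ≤ A + ∫ t in a..b, h t := by
    have := integral_mono_ae_restrict hab (hRac.fun_mul hEac).intervalIntegrable_deriv hhi hderiv
    simp only [R, G, integral_same, neg_zero, exp_zero, add_zero, mul_one] at hFTC this ⊢
    linarith
  calc u b ≤ R b := hle b ⟨hab, le_rfl⟩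
    _ = R b * exp (-G b) * exp (G b) := by
        rw [mul_assoc, ← exp_add, neg_add_cancel, exp_zero, mul_one]
    _ ≤ (A + ∫ t in a..b, h t) * exp (G b) := by gcongr

theorem le_mul_exp_integral_of_hasDerivAt_le {y y' g h : ℝ → ℝ} {a b : ℝ} (hab : a ≤ b)
    (hy : ContinuousOn y (Icc a b)) (hy' : ∀ x ∈ Ioo a b, HasDerivAt y (y' x) x)
    (hle : ∀ x ∈ Ioo a b, y' x ≤ g x * y x + h x) (hgi : IntervalIntegrable g volume a b)
    (hhi : IntervalIntegrable h volume a b) (hg0 : ∀ x ∈ Icc a b, 0 ≤ g x)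
    (hh0 : ∀ x ∈ Icc a b, 0 ≤ h x) :
    y b ≤ (y a + ∫ t in a..b, h t) * exp (∫ t in a..b, g t) := by
  have hφi : IntervalIntegrable (fun t ↦ g t * y t + h t) volume a b :=
    (hgi.mul_continuousOn (by rwa [uIcc_of_le hab])).add hhi
  refine le_mul_exp_integral_of_le_add_integral hab hy hgi hhi hg0 hh0 fun x hx ↦ ?_
  have hax : uIcc a x ⊆ uIcc a b := uIcc_subset_uIcc_left (by rwa [uIcc_of_le hab])
  have := sub_le_integral_of_hasDeriv_right_of_le hx.1 (hy.mono (Icc_subset_Icc_right hx.2))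
    (fun z hz ↦ (hy' z ⟨hz.1, hz.2.trans_le hx.2⟩).hasDerivWithinAt)
    ((intervalIntegrable_iff_integrableOn_Icc_of_le hx.1).1 (hφi.mono_set hax))
    (fun z hz ↦ hle z ⟨hz.1, hz.2.trans_le hx.2⟩)
  linarith

theorem le_add_mul_exp_of_integral_le {y y' g h : ℝ → ℝ} {a b s c1 c2 : ℝ}
    (hs : s ∈ Icc a b) (hy : ContinuousOn y (Icc a b))
    (hy' : ∀ x ∈ Ioo a b, HasDerivAt y (y' x) x) (hle : ∀ x ∈ Ioo a b, y' x ≤ g x * y x + h x)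
    (hgi : IntervalIntegrable g volume a b) (hhi : IntervalIntegrable h volume a b)
    (hg0 : ∀ x ∈ Icc a b, 0 ≤ g x) (hh0 : ∀ x ∈ Icc a b, 0 ≤ h x) (hys : 0 ≤ y s)
    (hg : ∫ x in a..b, g x ≤ c1) (hh : ∫ x in a..b, h x ≤ c2) :
    y b ≤ (y s + c2) * exp c1 := by
  have hsub : Icc s b ⊆ Icc a b := Icc_subset_Icc_left hs.1
  have huIcc : uIcc s b ⊆ uIcc a b := by
    rwa [uIcc_of_le hs.2, uIcc_of_le (hs.1.trans hs.2)]
  have hmono {f : ℝ → ℝ} (hf0 : ∀ x ∈ Icc a b, 0 ≤ f x)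
      (hfi : IntervalIntegrable f volume a b) : ∫ x in s..b, f x ≤ ∫ x in a..b, f x :=
    integral_mono_interval hs.1 hs.2 le_rfl ((ae_restrict_iff' measurableSet_Ioc).2
      (.of_forall fun x hx ↦ hf0 x (Ioc_subset_Icc_self hx))) hfi
  calc y b ≤ (y s + ∫ x in s..b, h x) * exp (∫ x in s..b, g x) :=
        le_mul_exp_integral_of_hasDerivAt_le hs.2 (hy.mono hsub)
          (fun x hx ↦ hy' x (Ioo_subset_Ioo_left hs.1 hx))
          (fun x hx ↦ hle x (Ioo_subset_Ioo_left hs.1 hx)) (hgi.mono_set huIcc)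
          (hhi.mono_set huIcc) (fun x hx ↦ hg0 x (hsub hx)) (fun x hx ↦ hh0 x (hsub hx))
    _ ≤ (y s + c2) * exp c1 := by
        refine mul_le_mul_of_nonneg ?_ ?_ ?_ (exp_pos c1).le
        · exact add_le_add_right ((hmono hh0 hhi).trans hh) _
        · exact exp_le_exp.2 ((hmono hg0 hgi).trans hg)
        · exact add_nonneg hys (intervalIntegral.integral_nonneg hs.2 fun x hx ↦ hh0 x (hsub hx))

theorem uniform_gronwall_general (t0 r c1 c2 c3 : ℝ) (hr : 0 < r) (g h y y' : ℝ → ℝ)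
    (hg0 : ∀ t, t0 ≤ t → 0 ≤ g t) (hh0 : ∀ t, t0 ≤ t → 0 ≤ h t) (hy0 : ∀ t, t0 ≤ t → 0 ≤ y t)
    (hgint : ∀ t, t0 ≤ t → IntervalIntegrable g volume t (t + r))
    (hhint : ∀ t, t0 ≤ t → IntervalIntegrable h volume t (t + r))
    (hyint : ∀ t, t0 ≤ t → IntervalIntegrable y volume t (t + r))
    (hderiv : ∀ t, t0 ≤ t → HasDerivAt y (y' t) t)
    (hineq : ∀ t, t0 ≤ t → y' t ≤ g t * y t + h t)
    (hg : ∀ t, t0 ≤ t → (∫ s in t..(t + r), g s) ≤ c1)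
    (hh : ∀ t, t0 ≤ t → (∫ s in t..(t + r), h s) ≤ c2)
    (hy : ∀ t, t0 ≤ t → (∫ s in t..(t + r), y s) ≤ c3) :
    ∀ t, t0 ≤ t → y (t + r) ≤ (c3 / r + c2) * Real.exp c1 := by
  intro t ht
  have htr : t ≤ t + r := by linarith
  have hpoint (s : ℝ) (hs : s ∈ Icc t (t + r)) : y (t + r) ≤ (y s + c2) * exp c1 :=
    le_add_mul_exp_of_integral_le hs
      (fun x hx ↦ (hderiv x (ht.trans hx.1)).continuousAt.continuousWithinAt)
      (fun x hx ↦ hderiv x (ht.trans hx.1.le)) (fun x hx ↦ hineq x (ht.trans hx.1.le))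
      (hgint t ht) (hhint t ht) (fun x hx ↦ hg0 x (ht.trans hx.1))
      (fun x hx ↦ hh0 x (ht.trans hx.1)) (hy0 s (ht.trans hs.1)) (hg t ht) (hh t ht)
  have havg : r * y (t + r) ≤ (c3 + c2 * r) * exp c1 :=
    calc r * y (t + r) = ∫ _ in t..t + r, y (t + r) := by simp
      _ ≤ ∫ s in t..t + r, (y s + c2) * exp c1 :=
          integral_mono_on htr intervalIntegrable_const
            (((hyint t ht).add intervalIntegrable_const).mul_const _) hpoint
      _ = ((∫ s in t..t + r, y s) + c2 * r) * exp c1 := by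
          rw [intervalIntegral.integral_mul_const,
            intervalIntegral.integral_add (hyint t ht) intervalIntegrable_const]
          simp [mul_comm]
      _ ≤ (c3 + c2 * r) * exp c1 := by gcongr; exact hy t ht
  rw [div_add' _ _ _ hr.ne', div_mul_eq_mul_div, le_div_iff₀ hr]
  linarith

/-- **Uniform Gronwall lemma.** -/
theorem uniform_gronwall (t0 r c1 c2 c3 : ℝ) (hr : 0 < r) (hc1 : 0 < c1) (hc2 : 0 < c2)
    (hc3 : 0 < c3) (g h y y' : ℝ → ℝ)
    (hg0 : ∀ t, t0 ≤ t → 0 ≤ g t) (hh0 : ∀ t, t0 ≤ t → 0 ≤ h t) (hy0 : ∀ t, t0 ≤ t → 0 ≤ y t)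
    (hgint : ∀ t, t0 ≤ t → IntervalIntegrable g volume t (t + r))
    (hhint : ∀ t, t0 ≤ t → IntervalIntegrable h volume t (t + r))
    (hyint : ∀ t, t0 ≤ t → IntervalIntegrable y volume t (t + r))
    (hderiv : ∀ t, t0 ≤ t → HasDerivAt y (y' t) t)
    (hineq : ∀ t, t0 ≤ t → y' t ≤ g t * y t + h t)
    (hg : ∀ t, t0 ≤ t → (∫ s in t..(t + r), g s) ≤ c1)
    (hh : ∀ t, t0 ≤ t → (∫ s in t..(t + r), h s) ≤ c2)
    (hy : ∀ t, t0 ≤ t → (∫ s in t..(t + r), y s) ≤ c3) :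
    ∀ t, t0 ≤ t → y (t + r) ≤ (c3 / r + c2) * Real.exp c1 :=
  uniform_gronwall_general t0 r c1 c2 c3 hr g h y y' hg0 hh0 hy0 hgint hhint hyint hderiv hineq hg
    hh hy
end

section
/- Let ν ≥ 0 and r_0 > 0 with r_0² > ν². If r : [0, t*) → ℝ is continuous with r(0) = r_0 and satisfies the integro-differential equation r'(t) = r(t)·∫_0^t r(τ)² dτ + ν·r(t), with t* = (π/2 - arctan(ν/√(r_0²-ν²)))/√(r_0²-ν²), then ∫_0^t r(τ)² dτ → ∞ as t → t*⁻; in particular r cannot be extended continuously past t*. -/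
/-!
Along a solution, `r² - (G + ν)²` is conserved, where `G t = ∫_0^t r²`; its value is
`r₀² - ν² = c²`. Hence `G' = r² = (G + ν)² + c²` is a Riccati equation with `G 0 = 0`, solved by
`G t + ν = c · tan (c t + arctan (ν / c))`. The argument of `tan` reaches `π / 2` exactly at `t*`.
-/

open Real Set Filter MeasureTheory intervalIntegral

open scoped Topology

lemma eq_of_hasDerivAt_zero {f : ℝ → ℝ} {a b : ℝ} (hab : a ≤ b) (hf : ContinuousOn f (Icc a b))
    (hf' : ∀ x ∈ Ioo a b, HasDerivAt f 0 x) : f b = f a := by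
  have h := integral_eq_sub_of_hasDerivAt_of_le hab hf hf' intervalIntegrable_const
  rw [intervalIntegral.integral_zero] at h
  linarith

lemma continuousOn_primitive_Icc {f : ℝ → ℝ} {a b : ℝ} (hab : a ≤ b)
    (hf : ContinuousOn f (Icc a b)) : ContinuousOn (fun u => ∫ τ in a..u, f τ) (Icc a b) := by
  rw [← uIcc_of_le hab] at hf ⊢
  exact continuousOn_primitive_interval (hf.integrableOn_compact isCompact_uIcc)

lemma hasDerivAt_primitive_of_continuousOn_Ico {f : ℝ → ℝ} {a b t : ℝ}
    (hf : ContinuousOn f (Ico a b)) (ht : t ∈ Ioo a b) :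
    HasDerivAt (fun u => ∫ τ in a..u, f τ) (f t) t :=
  integral_hasDerivAt_right
    ((hf.mono (Icc_subset_Ico_right ht.2)).intervalIntegrable_of_Icc ht.1.le)
    ((hf.mono Ioo_subset_Ico_self).stronglyMeasurableAtFilter isOpen_Ioo t ht)
    (hf.continuousAt (Ico_mem_nhds ht.1 ht.2))

lemma eq_tan_of_hasDerivAt_eq_sq_add_sq {y : ℝ → ℝ} {c a b : ℝ} (hc : c ≠ 0) (hab : a ≤ b)
    (hy : ContinuousOn y (Icc a b)) (hy' : ∀ x ∈ Ioo a b, HasDerivAt y (y x ^ 2 + c ^ 2) x) :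
    y b = c * tan (c * (b - a) + arctan (y a / c)) := by
  have hconst : arctan (y b / c) - c * b = arctan (y a / c) - c * a := by
    refine eq_of_hasDerivAt_zero (f := fun x => arctan (y x / c) - c * x) hab ?_ fun x hx => ?_
    · exact (continuous_arctan.comp_continuousOn (hy.div_const c)).sub
        (continuousOn_const.mul continuousOn_id)
    · refine (((hy' x hx).div_const c).arctan.fun_sub
        ((hasDerivAt_id x).const_mul c)).congr_deriv ?_
      field_simp
      ring
  rw [show c * (b - a) + arctan (y a / c) = arctan (y b / c) by linarith, tan_arctan]
  field_simp

lemma tendsto_tan_mul_add_nhdsLT {c θ t₀ : ℝ} (hc : 0 < c) (h : c * t₀ + θ = π / 2) :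
    Tendsto (fun t => tan (c * t + θ)) (𝓝[<] t₀) atTop := by
  refine tendsto_tan_pi_div_two.comp (tendsto_nhdsWithin_of_tendsto_nhds_of_eventually_within _
    ?_ (eventually_nhdsWithin_of_forall fun t ht => ?_))
  · rw [← h]
    exact ((continuous_const.mul continuous_id).add continuous_const).continuousAt.tendsto.mono_left
      nhdsWithin_le_nhds
  · rw [mem_Iio, ← h]
    have : c * t < c * t₀ := mul_lt_mul_of_pos_left ht hc
    linarith

section Ansatz

variable {ν T : ℝ} {r : ℝ → ℝ}
  (hode : ∀ t ∈ Ico (0:ℝ) T, HasDerivAt r (r t * (∫ τ in (0:ℝ)..t, r τ ^ 2) + ν * r t) t)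
include hode

lemma ansatz_continuousOn : ContinuousOn r (Ico 0 T) :=
  fun t ht => (hode t ht).continuousAt.continuousWithinAt

lemma ansatz_continuousOn_integral {t : ℝ} (ht : t ∈ Ico 0 T) :
    ContinuousOn (fun s => ∫ τ in (0:ℝ)..s, r τ ^ 2) (Icc 0 t) :=
  continuousOn_primitive_Icc ht.1
    (((ansatz_continuousOn hode).mono (Icc_subset_Ico_right ht.2)).pow 2)

lemma ansatz_hasDerivAt_integral {s : ℝ} (hs : s ∈ Ioo 0 T) :
    HasDerivAt (fun u => ∫ τ in (0:ℝ)..u, r τ ^ 2) (r s ^ 2) s :=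
  hasDerivAt_primitive_of_continuousOn_Ico (f := fun τ => r τ ^ 2)
    ((ansatz_continuousOn hode).pow 2) hs

lemma ansatz_sq_sub_sq_eq {t : ℝ} (ht : t ∈ Ico 0 T) :
    r t ^ 2 - ((∫ τ in (0:ℝ)..t, r τ ^ 2) + ν) ^ 2 = r 0 ^ 2 - ν ^ 2 := by
  have key := eq_of_hasDerivAt_zero ht.1
    (f := fun s => r s ^ 2 - ((∫ τ in (0:ℝ)..s, r τ ^ 2) + ν) ^ 2)
    ((((ansatz_continuousOn hode).mono (Icc_subset_Ico_right ht.2)).pow 2).sub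
      (((ansatz_continuousOn_integral hode ht).add continuousOn_const).pow 2))
    fun s hs => by
      have hs' : s ∈ Ioo 0 T := ⟨hs.1, hs.2.trans ht.2⟩
      refine (((hode s (Ioo_subset_Ico_self hs')).fun_pow 2).fun_sub
        (((ansatz_hasDerivAt_integral hode hs').add_const ν).fun_pow 2)).congr_deriv ?_
      push_cast
      ring
  simpa using key

lemma ansatz_integral_sq_eq_tan {c : ℝ} (hc : c ≠ 0) (hc2 : c ^ 2 = r 0 ^ 2 - ν ^ 2) {t : ℝ}
    (ht : t ∈ Ico 0 T) :
    ∫ τ in (0:ℝ)..t, r τ ^ 2 = c * tan (c * t + arctan (ν / c)) - ν := by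
  have key := eq_tan_of_hasDerivAt_eq_sq_add_sq (y := fun s => (∫ τ in (0:ℝ)..s, r τ ^ 2) + ν)
    hc ht.1 ((ansatz_continuousOn_integral hode ht).add continuousOn_const) fun s hs => by
      have hs' : s ∈ Ioo 0 T := ⟨hs.1, hs.2.trans ht.2⟩
      refine ((ansatz_hasDerivAt_integral hode hs').add_const ν).congr_deriv ?_
      linarith [ansatz_sq_sub_sq_eq hode (Ioo_subset_Ico_self hs')]
  simp only [integral_same, zero_add, sub_zero] at key
  linarith

end Ansatz

theorem ansatz_blowup_general (ν r0 : ℝ) (h : ν ^ 2 < r0 ^ 2)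
    (tstar : ℝ)
    (htstar : tstar = (Real.pi / 2 - Real.arctan (ν / Real.sqrt (r0 ^ 2 - ν ^ 2))) /
      Real.sqrt (r0 ^ 2 - ν ^ 2))
    (r : ℝ → ℝ) (hinit : r 0 = r0)
    (hode : ∀ t ∈ Ico (0:ℝ) tstar,
      HasDerivAt r (r t * (∫ τ in (0:ℝ)..t, (r τ) ^ 2) + ν * r t) t) :
    Tendsto (fun t => ∫ τ in (0:ℝ)..t, (r τ) ^ 2) (nhdsWithin tstar (Iio tstar)) atTop := by
  set c := √(r0 ^ 2 - ν ^ 2)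
  have hc : 0 < c := sqrt_pos.2 (by linarith)
  have hc2 : c ^ 2 = r 0 ^ 2 - ν ^ 2 := by rw [hinit]; exact sq_sqrt (by linarith)
  have hblowup : c * tstar + arctan (ν / c) = π / 2 := by
    rw [htstar]
    field_simp
    ring
  have htstar_pos : 0 < tstar := by
    rw [htstar]
    exact div_pos (by linarith [arctan_lt_pi_div_two (ν / c)]) hc
  refine tendsto_atTop_add_const_right _ (-ν)
    ((tendsto_tan_mul_add_nhdsLT hc hblowup).const_mul_atTop hc) |>.congr' ?_
  filter_upwards [Ioo_mem_nhdsLT htstar_pos] with t ht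
  rw [ansatz_integral_sq_eq_tan hode hc.ne' hc2 (Ioo_subset_Ico_self ht)]
  ring

/-- Finite-time blow-up of the ansatz `f_x(x,t) = r(t)·cos x`:
the quantity `∫_0^t r(τ)² dτ` blows up as `t → t*⁻`. -/
theorem ansatz_blowup (ν r0 : ℝ) (hν : 0 ≤ ν) (hr0 : 0 < r0) (h : ν ^ 2 < r0 ^ 2)
    (tstar : ℝ)
    (htstar : tstar = (Real.pi / 2 - Real.arctan (ν / Real.sqrt (r0 ^ 2 - ν ^ 2))) /
      Real.sqrt (r0 ^ 2 - ν ^ 2))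
    (r : ℝ → ℝ) (hcont : ContinuousOn r (Ico 0 tstar)) (hinit : r 0 = r0)
    (hode : ∀ t ∈ Ico (0:ℝ) tstar,
      HasDerivAt r (r t * (∫ τ in (0:ℝ)..t, (r τ) ^ 2) + ν * r t) t) :
    Tendsto (fun t => ∫ τ in (0:ℝ)..t, (r τ) ^ 2) (nhdsWithin tstar (Iio tstar)) atTop :=
  ansatz_blowup_general ν r0 h tstar htstar r hinit hode
end

section
/- Let M : [0,T) → ℝ be differentiable with M(0) > 0 and let g : [0,T) → ℝ be differentiable with g(0) = 0 and g ≥ 0. Suppose (M+g)'(t) ≤ M(t)² + g(t)·M(t) for all t, and M(t) ≥ 0. Then M(t) + g(t) ≤ M(0)/(1 - M(0)·t) for all t ∈ [0, min(T, 1/M(0))). -/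
/-!
`F = M + g` satisfies `F' ≤ M² + gM ≤ F²` and `F(0) = M(0)`, so it is a subsolution of the Riccati
equation `y' = y²`, whose solution with `y(0) = m` is `m / (1 - m s)`. The comparison is made strict
by raising the barrier to `m / (1 - m s) + δ e^{C (s - t)}` with `δ ≤ 1`: where `F` touches it,
`F' ≤ F²` falls short of the barrier's slope once `C ≥ 2 m / (1 - m t) + 1`. Then let `δ → 0`.
-/

open Real Set

theorem hasDerivAt_riccati_solution {m s : ℝ} (hs : 1 - m * s ≠ 0) :
    HasDerivAt (fun s => m / (1 - m * s)) ((m / (1 - m * s)) ^ 2) s := by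
  refine ((hasDerivAt_const s m).fun_div
    (((hasDerivAt_id' s).const_mul m).const_sub 1) hs).congr_deriv ?_
  rw [div_pow]
  ring

theorem one_sub_mul_pos_of_mem_Icc {m x t : ℝ} (hx : x ∈ Icc 0 t) (hmt : m * t < 1) :
    0 < 1 - m * x := by
  rcases le_total 0 m with hm | hm
  · nlinarith [mul_le_mul_of_nonneg_left hx.2 hm]
  · nlinarith [mul_nonpos_of_nonpos_of_nonneg hm hx.1]

theorem riccati_solution_le_of_mem_Icc {m x t : ℝ} (hx : x ∈ Icc 0 t) (hmt : m * t < 1) :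
    m / (1 - m * x) ≤ m / (1 - m * t) := by
  have hxpos := one_sub_mul_pos_of_mem_Icc hx hmt
  have htpos := one_sub_mul_pos_of_mem_Icc (right_mem_Icc.mpr (hx.1.trans hx.2)) hmt
  rw [div_le_div_iff₀ hxpos htpos]
  nlinarith [mul_le_mul_of_nonneg_left hx.2 (sq_nonneg m)]

section Comparison

variable {f f' : ℝ → ℝ} {m t : ℝ}

theorem le_riccati_solution_add_of_deriv_le_sq (ht : 0 ≤ t) (hf : ContinuousOn f (Icc 0 t))
    (hf' : ∀ x ∈ Ico 0 t, HasDerivWithinAt f (f' x) (Ici x) x)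
    (hbound : ∀ x ∈ Ico 0 t, f' x ≤ f x ^ 2) (hf0 : f 0 ≤ m) (hmt : m * t < 1)
    {δ C : ℝ} (hδ : 0 < δ) (hδ1 : δ ≤ 1) (hC : 0 < C) (hCm : 2 * (m / (1 - m * t)) + 1 ≤ C) :
    f t ≤ m / (1 - m * t) + δ := by
  have hpos : ∀ x ∈ Icc 0 t, 0 < 1 - m * x := fun x hx => one_sub_mul_pos_of_mem_Icc hx hmt
  have hB : ∀ x ∈ Icc 0 t, HasDerivAt (fun s => m / (1 - m * s) + δ * exp (C * (s - t)))
      ((m / (1 - m * x)) ^ 2 + δ * (exp (C * (x - t)) * C)) x := fun x hx => by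
    have hexp := (((hasDerivAt_id' x).sub_const t).const_mul C).exp.const_mul δ
    rw [mul_one] at hexp
    exact (hasDerivAt_riccati_solution (hpos x hx).ne').add hexp
  have htouch : ∀ x ∈ Ico 0 t, f x = m / (1 - m * x) + δ * exp (C * (x - t)) →
      f' x < (m / (1 - m * x)) ^ 2 + δ * (exp (C * (x - t)) * C) := by
    intro x hx hfx
    have hy := riccati_solution_le_of_mem_Icc (Ico_subset_Icc_self hx) hmt
    have hp : 0 < δ * exp (C * (x - t)) := by positivity
    have hp1 : δ * exp (C * (x - t)) < 1 :=
      mul_lt_one_of_nonneg_of_lt_one_right hδ1 (exp_pos _).le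
        (exp_lt_one_iff.mpr (mul_neg_of_pos_of_neg hC (sub_neg.mpr hx.2)))
    calc f' x ≤ f x ^ 2 := hbound x hx
      _ = (m / (1 - m * x) + δ * exp (C * (x - t))) ^ 2 := by rw [hfx]
      _ < (m / (1 - m * x)) ^ 2 + δ * (exp (C * (x - t)) * C) := by nlinarith
  have hstart : f 0 ≤ m / (1 - m * 0) + δ * exp (C * (0 - t)) := by
    rw [mul_zero, sub_zero, div_one]
    exact le_add_of_le_of_nonneg hf0 (by positivity)
  have hcomp := image_le_of_deriv_right_lt_deriv_boundary' hf hf' hstart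
    (fun x hx => (hB x hx).continuousAt.continuousWithinAt)
    (fun x hx => (hB x (Ico_subset_Icc_self hx)).hasDerivWithinAt) htouch (right_mem_Icc.mpr ht)
  simpa only [sub_self, mul_zero, exp_zero, mul_one] using hcomp

theorem le_riccati_solution_of_deriv_le_sq (ht : 0 ≤ t) (hf : ContinuousOn f (Icc 0 t))
    (hf' : ∀ x ∈ Ico 0 t, HasDerivWithinAt f (f' x) (Ici x) x)
    (hbound : ∀ x ∈ Ico 0 t, f' x ≤ f x ^ 2) (hf0 : f 0 ≤ m) (hmt : m * t < 1) :
    f t ≤ m / (1 - m * t) := by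
  refine le_of_forall_pos_le_add fun δ hδ => ?_
  calc f t ≤ m / (1 - m * t) + min δ 1 :=
        le_riccati_solution_add_of_deriv_le_sq ht hf hf' hbound hf0 hmt (lt_min hδ one_pos)
          (min_le_right _ _) (by positivity : 0 < 2 * |m / (1 - m * t)| + 1)
          (by linarith [le_abs_self (m / (1 - m * t))])
    _ ≤ m / (1 - m * t) + δ := by gcongr; exact min_le_left _ _

end Comparison

theorem riccati_max_control_general (T : ℝ) (M g M' g' : ℝ → ℝ)
    (hM0 : 0 < M 0) (hg0 : g 0 = 0)
    (hMderiv : ∀ t ∈ Ico (0:ℝ) T, HasDerivAt M (M' t) t)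
    (hgderiv : ∀ t ∈ Ico (0:ℝ) T, HasDerivAt g (g' t) t)
    (hgnonneg : ∀ t ∈ Ico (0:ℝ) T, 0 ≤ g t)
    (hMnonneg : ∀ t ∈ Ico (0:ℝ) T, 0 ≤ M t)
    (hineq : ∀ t ∈ Ico (0:ℝ) T, M' t + g' t ≤ M t ^ 2 + g t * M t) :
    ∀ t ∈ Ico (0:ℝ) (min T (1 / M 0)), M t + g t ≤ M 0 / (1 - M 0 * t) := by
  rintro t ⟨ht0, ht⟩
  obtain ⟨htT, htM⟩ := lt_min_iff.mp ht
  have hsub : Icc 0 t ⊆ Ico 0 T := fun s hs => ⟨hs.1, hs.2.trans_lt htT⟩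
  have hderiv : ∀ s ∈ Icc 0 t, HasDerivAt (fun s => M s + g s) (M' s + g' s) s :=
    fun s hs => (hMderiv s (hsub hs)).add (hgderiv s (hsub hs))
  have hsubsol : ∀ s ∈ Ico 0 t, M' s + g' s ≤ (M s + g s) ^ 2 := fun s hs => by
    have hsT := hsub (Ico_subset_Icc_self hs)
    calc M' s + g' s ≤ M s ^ 2 + g s * M s := hineq s hsT
      _ ≤ (M s + g s) ^ 2 := by
        nlinarith [mul_nonneg (hgnonneg s hsT) (add_nonneg (hMnonneg s hsT) (hgnonneg s hsT))]
  exact le_riccati_solution_of_deriv_le_sq ht0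
    (fun s hs => (hderiv s hs).continuousAt.continuousWithinAt)
    (fun s hs => (hderiv s (Ico_subset_Icc_self hs)).hasDerivWithinAt) hsubsol
    (by simp [hg0]) (by rwa [lt_div_iff₀' hM0] at htM)

/-- Riccati-type comparison controlling `M(t) + g(t)` (Lemma 6.2). -/
theorem riccati_max_control (T : ℝ) (hT : 0 < T) (M g M' g' : ℝ → ℝ)
    (hM0 : 0 < M 0) (hg0 : g 0 = 0)
    (hMderiv : ∀ t ∈ Ico (0:ℝ) T, HasDerivAt M (M' t) t)
    (hgderiv : ∀ t ∈ Ico (0:ℝ) T, HasDerivAt g (g' t) t)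
    (hgnonneg : ∀ t ∈ Ico (0:ℝ) T, 0 ≤ g t)
    (hMnonneg : ∀ t ∈ Ico (0:ℝ) T, 0 ≤ M t)
    (hineq : ∀ t ∈ Ico (0:ℝ) T, M' t + g' t ≤ M t ^ 2 + g t * M t) :
    ∀ t ∈ Ico (0:ℝ) (min T (1 / M 0)), M t + g t ≤ M 0 / (1 - M 0 * t) :=
  riccati_max_control_general T M g M' g' hM0 hg0 hMderiv hgderiv hgnonneg hMnonneg hineq
end
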